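/- For every x₀ ∈ [1/3, 2] there exists a bi-infinite sequence x : ℤ → ℝ with x 0 = x₀, x n ∈ [1/3, 2] for all n, and for all n, x (n+1) = 2 * x n ∨ x (n+1) = x n / 3. -/
import Mathlib

noncomputable def kariF (x : ℝ) : ℝ := if x ≤ 1 then 2 * x else x / 3

noncomputable def kariG (y : ℝ) : ℝ := if 2/3 ≤ y then y / 2 else 3 * y

lemma kariF_mem {x : ℝ} (hx : x ∈ Set.Icc (1/3 : ℝ) 2) :
    kariF x ∈ Set.Icc (1/3 : ℝ) 2 := by
  obtain ⟨h1, h2⟩ := hx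
  unfold kariF; split <;> constructor <;> linarith

lemma kariG_mem {y : ℝ} (hy : y ∈ Set.Icc (1/3 : ℝ) 2) :
    kariG y ∈ Set.Icc (1/3 : ℝ) 2 := by
  obtain ⟨h1, h2⟩ := hy
  unfold kariG; split <;> constructor <;> linarith

lemma kariF_step (x : ℝ) : kariF x = 2 * x ∨ kariF x = x / 3 := by
  unfold kariF; split
  · exact Or.inl rfl
  · exact Or.inr rfl

lemma kariG_step (y : ℝ) : y = 2 * kariG y ∨ y = kariG y / 3 := by
  unfold kariG; split
  · left; ring
  · right; ring

theorem exists_biinfinite_kari_sequence (x₀ : ℝ) (hx₀ : x₀ ∈ Set.Icc (1/3 : ℝ) 2) :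
    ∃ x : ℤ → ℝ, x 0 = x₀ ∧ (∀ n, x n ∈ Set.Icc (1/3 : ℝ) 2) ∧
      ∀ n, x (n + 1) = 2 * x n ∨ x (n + 1) = x n / 3 := by
  set x : ℤ → ℝ := fun n => match n with
    | Int.ofNat k => kariF^[k] x₀
    | Int.negSucc k => kariG^[k + 1] x₀ with hx
  have hFmem : ∀ k : ℕ, kariF^[k] x₀ ∈ Set.Icc (1/3 : ℝ) 2 := by
    intro k; induction k with
    | zero => exact hx₀
    | succ k ih => rw [Function.iterate_succ_apply']; exact kariF_mem ih
  have hGmem : ∀ k : ℕ, kariG^[k] x₀ ∈ Set.Icc (1/3 : ℝ) 2 := by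
    intro k; induction k with
    | zero => exact hx₀
    | succ k ih => rw [Function.iterate_succ_apply']; exact kariG_mem ih
  refine ⟨x, rfl, ?_, ?_⟩
  · intro n
    cases n with
    | ofNat k => exact hFmem k
    | negSucc k => exact hGmem (k + 1)
  · intro n
    cases n with
    | ofNat k =>
      have h1 : x (Int.ofNat k + 1) = kariF (kariF^[k] x₀) := by
        show x (Int.ofNat (k + 1)) = _
        simp only [hx, Function.iterate_succ_apply']
      rw [h1]
      exact kariF_step _
    | negSucc k =>
      cases k with
      | zero =>
        have e : Int.negSucc 0 + 1 = Int.ofNat 0 := by decide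
        have h1 : x (Int.negSucc 0 + 1) = x₀ := by rw [e]; rfl
        have h2 : x (Int.negSucc 0) = kariG x₀ := rfl
        rw [h1, h2]
        exact kariG_step x₀
      | succ k =>
        have h1 : x (Int.negSucc (k + 1) + 1) = kariG^[k + 1] x₀ := by
          show x (Int.negSucc k) = _
          rfl
        have h2 : x (Int.negSucc (k + 1)) = kariG (kariG^[k + 1] x₀) := by
          show kariG^[k + 2] x₀ = _
          rw [Function.iterate_succ_apply']
        rw [h1, h2]
        exact kariG_step _
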